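/- arXiv:0706.0606 — 6 statements merged into one kernel-verified Lean document; each statement's English description precedes it below -/
import Mathlib

section
/- For every integer n ≥ 1, every real p > 1, every D ∈ 𝓜ₙ and every u ∈ ℝⁿ, the function f_p(D,u,·) is a probability density: ∫_{ℝⁿ} f_p(D,u,x) dx = 1. -/
open MeasureTheory Matrix

/-- Normalization constant `A_{n,p}` for `p > 1`. -/
noncomputable def gaussA (n : ℕ) (p : ℝ) : ℝ :=
  ((p - 1) / (2 * p - n * (1 - p))) ^ ((n : ℝ) / 2) *
    Real.Gamma (p / (p - 1) + n / 2) /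
    (Real.pi ^ ((n : ℝ) / 2) * Real.Gamma (p / (p - 1)))

/-- The `p`-Gaussian density for `p > 1`. -/
noncomputable def gaussF (n : ℕ) (p : ℝ) (D : Matrix (Fin n) (Fin n) ℝ)
    (u x : Fin n → ℝ) : ℝ :=
  if 0 ≤ 1 - (p - 1) / (2 * p - n * (1 - p)) * ((x - u) ⬝ᵥ D.mulVec (x - u)) then
    gaussA n p * Real.sqrt D.det *
      (1 - (p - 1) / (2 * p - n * (1 - p)) * ((x - u) ⬝ᵥ D.mulVec (x - u))) ^ (1 / (p - 1))
  else 0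

/-!
With `s = 1 / (p - 1)`, the density is `A_{n,p} √(det D) · max (1 - ⟨x - u, aD (x - u)⟩, 0) ^ s`.
Translating by `u` and substituting `z = (aD)^{1/2} x` leaves `(a ^ n det D)^{-1/2}` times
`∫ max (1 - |z|², 0) ^ s dz`; in polar coordinates, followed by `t = r²`, the latter is a Beta
integral equal to `π ^ (n/2) Γ(s + 1) / Γ(s + 1 + n/2)`. Since `p / (p - 1) = s + 1`, this is
exactly the reciprocal of `A_{n,p} a ^ (-n/2)`.
-/

open Set Metric Real
open ProbabilityTheory (beta)

lemma integral_comp_mulVec {ι F : Type*} [Fintype ι] [DecidableEq ι] [NormedAddCommGroup F]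
    [NormedSpace ℝ F] (M : Matrix ι ι ℝ) (hM : M.det ≠ 0) (g : (ι → ℝ) → F) :
    ∫ x, g (M *ᵥ x) = |M.det|⁻¹ • ∫ y, g y := by
  have hdet : LinearMap.det (toLin' M) ≠ 0 := by rwa [LinearMap.det_toLin']
  let e := (LinearMap.equivOfDetNeZero _ hdet).toContinuousLinearEquiv
  have hmap := e.toHomeomorph.measurableEmbedding.integral_map (μ := volume) g
  rw [show ⇑e.toHomeomorph = toLin' M from rfl, map_linearMap_volume_pi_eq_smul_volume_pi hdet,
    integral_smul_measure, LinearMap.det_toLin', abs_inv,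
    ENNReal.toReal_ofReal (by positivity)] at hmap
  exact hmap.symm

open scoped MatrixOrder in
lemma integral_comp_dotProduct_mulVec_of_posDef {ι F : Type*} [Fintype ι] [DecidableEq ι]
    [NormedAddCommGroup F] [NormedSpace ℝ F] {D : Matrix ι ι ℝ} (hD : D.PosDef) (g : ℝ → F) :
    ∫ x : ι → ℝ, g (x ⬝ᵥ D *ᵥ x) = (√D.det)⁻¹ • ∫ z : ι → ℝ, g (z ⬝ᵥ z) := by
  set S := CFC.sqrt D
  have hS : S.PosSemidef := (CFC.sqrt_nonneg D).posSemidef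
  have hSS : S * S = D := CFC.sqrt_mul_sqrt_self D hD.posSemidef.nonneg
  have hquad : ∀ x, x ⬝ᵥ D *ᵥ x = S *ᵥ x ⬝ᵥ S *ᵥ x := fun x => by
    rw [← hSS, ← mulVec_mulVec, ← dotProduct_transpose_mulVec,
      ← conjTranspose_eq_transpose_of_trivial, hS.isHermitian.eq]
  have hdet : |S.det| = √D.det := by rw [← hSS, det_mul, sqrt_mul_self_eq_abs]
  have hS0 : S.det ≠ 0 := by
    rw [← abs_ne_zero, hdet]
    exact (sqrt_pos.2 hD.det_pos).ne'
  simp_rw [hquad]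
  rw [integral_comp_mulVec S hS0 (fun z => g (z ⬝ᵥ z)), hdet]

lemma integral_rpow_mul_one_sub_rpow_eq_beta {a b : ℝ} (ha : 0 < a) (hb : 0 < b) :
    ∫ x in (0 : ℝ)..1, x ^ (a - 1) * (1 - x) ^ (b - 1) = beta a b := by
  rw [ProbabilityTheory.beta_eq_betaIntegralReal a b ha hb, Complex.betaIntegral,
    ← Complex.ofReal_re (∫ x in (0 : ℝ)..1, _), ← intervalIntegral.integral_ofReal]
  congr 1
  refine intervalIntegral.integral_congr fun x hx => ?_
  rw [uIcc_of_le zero_le_one] at hx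
  push_cast
  rw [Complex.ofReal_cpow hx.1, Complex.ofReal_cpow (sub_nonneg.2 hx.2)]
  push_cast
  rfl

lemma integral_Ioi_rpow_mul_max_one_sub_sq_rpow {c s : ℝ} (hc : 0 < c) (hs : 0 < s) :
    ∫ r in Ioi (0 : ℝ), r ^ (c - 1) * max (1 - r ^ 2) 0 ^ s = beta (c / 2) (s + 1) / 2 := by
  set g : ℝ → ℝ := fun t => t ^ (c / 2 - 1) * max (1 - t) 0 ^ s / 2
  have hsubst : ∀ r ∈ Ioi (0 : ℝ),
      r ^ (c - 1) * max (1 - r ^ 2) 0 ^ s = (2 * r ^ ((2 : ℝ) - 1)) • g (r ^ (2 : ℝ)) := by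
    intro r (hr : 0 < r)
    have hpow : (r ^ (2 : ℝ)) ^ (c / 2 - 1) * r = r ^ (c - 1) := by
      rw [← rpow_mul hr.le, ← rpow_add_one hr.ne']
      ring_nf
    simp only [g, smul_eq_mul, show (2 : ℝ) - 1 = 1 by norm_num, rpow_one]
    rw [← hpow, rpow_two]
    ring
  have hvanish : ∀ t ∈ Ioi (0 : ℝ) \ Ioc 0 1, g t = 0 := by
    rintro t ⟨ht0, ht1⟩
    have ht : 1 < t := by simpa [mem_Ioi.1 ht0] using ht1
    simp [g, max_eq_right (by linarith : 1 - t ≤ 0), zero_rpow hs.ne']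
  rw [setIntegral_congr_fun measurableSet_Ioi hsubst, integral_comp_rpow_Ioi_of_pos two_pos,
    setIntegral_eq_of_subset_of_forall_sdiff_eq_zero measurableSet_Ioi Ioc_subset_Ioi_self hvanish,
    ← intervalIntegral.integral_of_le zero_le_one,
    ← integral_rpow_mul_one_sub_rpow_eq_beta (by positivity) (by positivity),
    ← intervalIntegral.integral_div]
  refine intervalIntegral.integral_congr fun t ht => ?_
  rw [uIcc_of_le zero_le_one] at ht
  simp only [g, max_eq_left (sub_nonneg.2 ht.2), add_sub_cancel_right]

lemma integral_max_one_sub_norm_sq_rpow {E : Type*} [NormedAddCommGroup E] [NormedSpace ℝ E]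
    [Nontrivial E] [FiniteDimensional ℝ E] [MeasurableSpace E] [BorelSpace E]
    (μ : Measure E) [μ.IsAddHaarMeasure] {s : ℝ} (hs : 0 < s) :
    ∫ x, max (1 - ‖x‖ ^ 2) 0 ^ s ∂μ = μ.real (ball 0 1) *
      (Gamma (Module.finrank ℝ E / 2 + 1) * Gamma (s + 1) /
        Gamma (Module.finrank ℝ E / 2 + (s + 1))) := by
  have hd : 0 < Module.finrank ℝ E := Module.finrank_pos
  have hpow : ∀ r ∈ Ioi (0 : ℝ), r ^ (Module.finrank ℝ E - 1) • max (1 - r ^ 2) 0 ^ s =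
      r ^ ((Module.finrank ℝ E : ℝ) - 1) * max (1 - r ^ 2) 0 ^ s := fun r _ => by
    rw [smul_eq_mul, ← rpow_natCast, Nat.cast_sub hd, Nat.cast_one]
  rw [integral_fun_norm_addHaar μ (fun r => max (1 - r ^ 2) 0 ^ s),
    setIntegral_congr_fun measurableSet_Ioi hpow,
    integral_Ioi_rpow_mul_max_one_sub_sq_rpow (by positivity) hs, ProbabilityTheory.beta,
    Gamma_add_one (s := (Module.finrank ℝ E : ℝ) / 2) (by positivity), nsmul_eq_mul, smul_eq_mul]
  ring

lemma integral_max_one_sub_dotProduct_self_rpow {ι : Type*} [Fintype ι] {s : ℝ} (hs : 0 < s) :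
    ∫ z : ι → ℝ, max (1 - z ⬝ᵥ z) 0 ^ s =
      π ^ ((Fintype.card ι : ℝ) / 2) * Gamma (s + 1) / Gamma (s + 1 + Fintype.card ι / 2) := by
  have hΓ : 0 < Gamma (s + 1) := Gamma_pos_of_pos (by linarith)
  cases isEmpty_or_nonempty ι
  · simp [integral_unique, Measure.real, volume_pi, hΓ.ne']
  have hnorm : ∀ x : EuclideanSpace ℝ ι, x.ofLp ⬝ᵥ x.ofLp = ‖x‖ ^ 2 := fun x => by
    rw [EuclideanSpace.real_norm_sq_eq]
    simp [dotProduct, sq]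
  have hΓ' : 0 < Gamma (Fintype.card ι / 2 + 1) := Gamma_pos_of_pos (by positivity)
  rw [← (EuclideanSpace.volume_preserving_symm_measurableEquiv_toLp ι).integral_comp'
    (fun z => max (1 - z ⬝ᵥ z) 0 ^ s)]
  simp only [MeasurableEquiv.toLp_symm_apply, hnorm]
  rw [integral_max_one_sub_norm_sq_rpow volume hs, measureReal_def, EuclideanSpace.volume_ball,
    finrank_euclideanSpace, ENNReal.ofReal_one, one_pow, one_mul,
    ENNReal.toReal_ofReal (by positivity), rpow_div_two_eq_sqrt _ pi_nonneg, rpow_natCast,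
    add_comm (s + 1)]
  field_simp

lemma gaussF_eq_mul_max_rpow {n : ℕ} {p : ℝ} (hp : 1 < p) (D : Matrix (Fin n) (Fin n) ℝ)
    (u x : Fin n → ℝ) :
    gaussF n p D u x = gaussA n p * √D.det *
      max (1 - (x - u) ⬝ᵥ (((p - 1) / (2 * p - n * (1 - p))) • D) *ᵥ (x - u)) 0 ^
        (1 / (p - 1)) := by
  rw [gaussF, smul_mulVec, dotProduct_smul, smul_eq_mul]
  split_ifs with h
  · rw [max_eq_left h]
  · rw [max_eq_right (not_le.mp h).le, zero_rpow (one_div_pos.2 (sub_pos.2 hp)).ne', mul_zero]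

theorem integral_gaussF_eq_one_general (n : ℕ) (p : ℝ) (hp : 1 < p)
    (D : Matrix (Fin n) (Fin n) ℝ) (hD : D.PosDef) (u : Fin n → ℝ) :
    ∫ x : Fin n → ℝ, gaussF n p D u x = 1 := by
  set a := (p - 1) / (2 * p - n * (1 - p)) with ha_def
  set s := 1 / (p - 1) with hs_def
  have ha : 0 < a := div_pos (by linarith) (by nlinarith [n.cast_nonneg (α := ℝ)])
  have hs : 0 < s := one_div_pos.2 (by linarith)
  simp_rw [gaussF_eq_mul_max_rpow hp]
  rw [integral_const_mul, integral_sub_right_eq_self (fun y => max (1 - y ⬝ᵥ (a • D) *ᵥ y) 0 ^ s),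
    integral_comp_dotProduct_mulVec_of_posDef (hD.smul ha) (fun t => max (1 - t) 0 ^ s),
    integral_max_one_sub_dotProduct_self_rpow hs, det_smul, Fintype.card_fin, smul_eq_mul]
  have hps : p / (p - 1) = s + 1 := by rw [hs_def, div_add_one (by linarith), add_sub_cancel]
  have hsqrt : √(a ^ n * D.det) = a ^ ((n : ℝ) / 2) * √D.det := by
    rw [sqrt_mul (by positivity), sqrt_eq_rpow, ← rpow_natCast, ← rpow_mul ha.le]
    ring_nf
  have hD0 : 0 < √D.det := sqrt_pos.2 hD.det_pos
  have hΓ : 0 < Gamma (s + 1) := Gamma_pos_of_pos (by linarith)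
  have hΓn : 0 < Gamma (s + 1 + n / 2) := Gamma_pos_of_pos (by positivity)
  rw [gaussA, hps, hsqrt, ← ha_def]
  field_simp

/-- for `n ≥ 1`, `p > 1`, `D` symmetric positive definite and `u ∈ ℝⁿ`,
`f_p(D,u,·)` integrates to 1. -/
theorem integral_gaussF_eq_one (n : ℕ) (hn : 1 ≤ n) (p : ℝ) (hp : 1 < p)
    (D : Matrix (Fin n) (Fin n) ℝ) (hD : D.PosDef) (u : Fin n → ℝ) :
    ∫ x : Fin n → ℝ, gaussF n p D u x = 1 :=
  integral_gaussF_eq_one_general n p hp D hD u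
end

section
/- Let D be an n×n real symmetric positive definite matrix, let X, Y be n×n real symmetric matrices, and let c be a real number. Then ∂²/∂s∂t [ (det(D + tX + sY))^c ] evaluated at t = s = 0 equals c·(det D)^c·( c·Tr(X D⁻¹)·Tr(Y D⁻¹) − Tr(X D⁻¹ Y D⁻¹) ). -/
/-!
Jacobi's formula `d/dt det (M + t • B) = det M * tr (M⁻¹ * B)` at `t = 0` comes from the
first-order expansion of `det (1 + t • A)`. Applied at `M = D + s • Y`, it shows that the inner
`t`-derivative equals `c * det (D + s • Y) ^ c * tr (X * (D + s • Y)⁻¹)` for all `s` near `0`.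
Differentiating this in `s` by the product rule, with Jacobi's formula once more and
`d/ds (D + s • Y)⁻¹ = -(D⁻¹ * Y * D⁻¹)`, gives the result.
-/

open Matrix Filter Topology

section Det

variable {ι 𝕜 : Type*} [Fintype ι] [DecidableEq ι] [NontriviallyNormedField 𝕜]

theorem hasDerivAt_det_one_add_smul (A : Matrix ι ι 𝕜) :
    HasDerivAt (fun t : 𝕜 => (1 + t • A).det) A.trace 0 := by
  have h := (det (1 + (Polynomial.X : Polynomial 𝕜) • A.map Polynomial.C)).hasDerivAt 0
  rw [derivative_det_one_add_X_smul] at h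
  convert h using 2 with t
  simp [eval_det, ← smul_eq_mul_diagonal]

theorem hasDerivAt_det_add_smul {M : Matrix ι ι 𝕜} (hM : IsUnit M.det) (B : Matrix ι ι 𝕜) :
    HasDerivAt (fun t : 𝕜 => (M + t • B).det) (M.det * (M⁻¹ * B).trace) 0 := by
  have factor (t : 𝕜) : M + t • B = M * (1 + t • (M⁻¹ * B)) := by
    rw [mul_add, mul_one, mul_smul_comm, mul_nonsing_inv_cancel_left _ _ hM]
  simpa only [factor, det_mul] using (hasDerivAt_det_one_add_smul (M⁻¹ * B)).const_mul M.det

end Det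

section Inverse

variable {ι 𝕜 : Type*} [Fintype ι] [DecidableEq ι] [RCLike 𝕜]

-- Any norm on matrices will do: it only serves to apply `hasFDerivAt_ringInverse`.
attribute [local instance] Matrix.linftyOpNormedAddCommGroup Matrix.linftyOpNormedRing
  Matrix.linftyOpNormedAlgebra

theorem hasDerivAt_inv_add_smul {M : Matrix ι ι 𝕜} (hM : IsUnit M.det) (B : Matrix ι ι 𝕜) :
    HasDerivAt (fun t : 𝕜 => (M + t • B)⁻¹) (-(M⁻¹ * B * M⁻¹)) 0 := by
  have : CompleteSpace (Matrix ι ι 𝕜) := FiniteDimensional.complete 𝕜 _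
  have hinv : HasFDerivAt (fun A : Matrix ι ι 𝕜 => A⁻¹)
      (-ContinuousLinearMap.mulLeftRight 𝕜 _ M⁻¹ M⁻¹) M := by
    simpa [coe_units_inv, nonsing_inv_eq_ringInverse] using
      hasFDerivAt_ringInverse (𝕜 := 𝕜) ((isUnit_iff_isUnit_det M).mpr hM).unit
  have hline : HasDerivAt (fun t : 𝕜 => M + t • B) B 0 := by
    have h := ((hasDerivAt_id (0 : 𝕜)).smul_const B).const_add M
    rw [one_smul] at h
    exact h
  have h := hinv.comp_hasDerivAt_of_eq 0 hline (by simp)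
  simp only [Function.comp_def, _root_.neg_apply, ContinuousLinearMap.mulLeftRight_apply] at h
  exact h

theorem hasDerivAt_trace_mul_inv_add_smul {M : Matrix ι ι 𝕜} (hM : IsUnit M.det)
    (A B : Matrix ι ι 𝕜) :
    HasDerivAt (fun t : 𝕜 => (A * (M + t • B)⁻¹).trace) (-(A * M⁻¹ * B * M⁻¹).trace) 0 := by
  let L : Matrix ι ι 𝕜 →L[𝕜] 𝕜 :=
    ((traceLinearMap ι 𝕜 𝕜).comp (LinearMap.mulLeft 𝕜 A)).toContinuousLinearMap
  exact (L.hasFDerivAt.comp_hasDerivAt 0 (hasDerivAt_inv_add_smul hM B)).congr_deriv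
    (by change (A * _).trace = _; simp [mul_assoc])

end Inverse

theorem hasDerivAt_det_add_smul_rpow {ι : Type*} [Fintype ι] [DecidableEq ι]
    {M : Matrix ι ι ℝ} (hM : M.det ≠ 0) (B : Matrix ι ι ℝ) (c : ℝ) :
    HasDerivAt (fun t : ℝ => (M + t • B).det ^ c) (c * M.det ^ c * (B * M⁻¹).trace) 0 := by
  have h := (hasDerivAt_det_add_smul hM.isUnit B).rpow_const (p := c) (Or.inl (by simpa using hM))
  simp only [zero_smul, add_zero] at h
  convert h using 1
  rw [trace_mul_comm, Real.rpow_sub_one hM]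
  field_simp

theorem secondDeriv_det_rpow_general (n : ℕ)
    (D X Y : Matrix (Fin n) (Fin n) ℝ) (hD : D.PosDef)
    (c : ℝ) :
    deriv (fun s : ℝ =>
        deriv (fun t : ℝ => (D + t • X + s • Y).det ^ c) 0) 0 =
      c * D.det ^ c *
        (c * (X * D⁻¹).trace * (Y * D⁻¹).trace - (X * D⁻¹ * Y * D⁻¹).trace) := by
  have hdet : D.det ≠ 0 := hD.det_pos.ne'
  have inner_deriv : (fun s : ℝ => deriv (fun t : ℝ => (D + t • X + s • Y).det ^ c) 0)
      =ᶠ[𝓝 0] fun s => c * (D + s • Y).det ^ c * (X * (D + s • Y)⁻¹).trace := by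
    have hcont : ContinuousAt (fun s : ℝ => (D + s • Y).det) 0 := by fun_prop
    filter_upwards [hcont.eventually_ne (by simpa using hdet)] with s hs
    simp_rw [add_right_comm D]
    exact (hasDerivAt_det_add_smul_rpow hs X c).deriv
  have outer := ((hasDerivAt_det_add_smul_rpow hdet Y c).const_mul c).mul
    (hasDerivAt_trace_mul_inv_add_smul hdet.isUnit X Y)
  simp only [zero_smul, add_zero] at outer
  rw [inner_deriv.deriv_eq]
  exact outer.deriv.trans (by ring)

/-- the second derivative of `(det(D + tX + sY))^c` at `t = s = 0`
equals `c·(det D)^c·(c·Tr(XD⁻¹)·Tr(YD⁻¹) − Tr(XD⁻¹YD⁻¹))`. -/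
theorem secondDeriv_det_rpow (n : ℕ)
    (D X Y : Matrix (Fin n) (Fin n) ℝ) (hD : D.PosDef)
    (hX : X.IsSymm) (hY : Y.IsSymm) (c : ℝ) :
    deriv (fun s : ℝ =>
        deriv (fun t : ℝ => (D + t • X + s • Y).det ^ c) 0) 0 =
      c * D.det ^ c *
        (c * (X * D⁻¹).trace * (Y * D⁻¹).trace - (X * D⁻¹ * Y * D⁻¹).trace) :=
  secondDeriv_det_rpow_general n D X Y hD c
end

section
/- Fix α, β ∈ ℝ with α ≠ −1/(2n). For every D ∈ 𝓜ₙ, u ∈ ℝⁿ, and all symmetric matrices X, Y, Z and vectors x, y, z ∈ ℝⁿ, the explicit covariant derivative Γ_{(D,u)}(X,x)(Y,y) = ( −(1/2)(XD⁻¹Y + YD⁻¹X) − (β/2)·D(x⊙y)D + (2αβ/(1+2nα))·⟨x,Dy⟩·D , (1/2)·D⁻¹(Xy + Yx) ) satisfies the Koszul identity g_{D,u}( Γ_{(D,u)}(X,x)(Y,y), (Z,z) ) = −(1/4)·Tr( D⁻¹(XD⁻¹Y + YD⁻¹X)D⁻¹Z ) − (α/2)·Tr( D⁻¹(XD⁻¹Y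 + YD⁻¹X) )·Tr(D⁻¹Z) + (β/2)·( ⟨y, Xz⟩ + ⟨x, Yz⟩ − ⟨x, Zy⟩ ). -/
open Matrix

/-- Symmetrized dyadic product `x⊙y = xyᵀ + yxᵀ`. -/
def symDyad (n : ℕ) (x y : Fin n → ℝ) : Matrix (Fin n) (Fin n) ℝ :=
  vecMulVec x y + vecMulVec y x

/-!
The matrix part of the metric is linear in its first slot, so `g(Γ, (Z, z))` splits over the
three terms of `Γ`. The term `D (x⊙y) D` pairs to `½ Tr((x⊙y) Z) + 2α⟨x, Dy⟩ Tr(D⁻¹Z)`, and the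
trace part is the only contribution that does not appear on the right-hand side. The term
`⟨x, Dy⟩ D` pairs to `(1 + 2nα)/2 · ⟨x, Dy⟩ Tr(D⁻¹Z)`, so the coefficient `2αβ/(1 + 2nα)` is exactly
the one that cancels it. The vector part pairs to `½(⟨y, Xz⟩ + ⟨x, Yz⟩)` because
`⟨D⁻¹v, Dz⟩ = ⟨v, z⟩` for symmetric `D`.
-/

namespace Matrix

variable {ι R : Type*} [Fintype ι]

lemma IsSymm.mulVec_dotProduct [CommSemiring R] {M : Matrix ι ι R} (hM : M.IsSymm)
    (a b : ι → R) : M *ᵥ a ⬝ᵥ b = a ⬝ᵥ M *ᵥ b := by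
  rw [dotProduct_mulVec, ← vecMul_transpose, hM.eq]

lemma trace_vecMulVec_mul [CommSemiring R] (a b : ι → R) (M : Matrix ι ι R) :
    (vecMulVec a b * M).trace = M *ᵥ a ⬝ᵥ b := by
  rw [vecMulVec_mul, trace_vecMulVec, dotProduct_comm, ← dotProduct_mulVec, dotProduct_comm]

lemma IsSymm.inv_mulVec_dotProduct_mulVec [CommRing R] [DecidableEq ι] {D : Matrix ι ι R}
    (hD : D.IsSymm) (hDu : IsUnit D) (v w : ι → R) : D⁻¹ *ᵥ v ⬝ᵥ D *ᵥ w = v ⬝ᵥ w := by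
  rw [← hD.mulVec_dotProduct, mulVec_mulVec,
    mul_nonsing_inv _ ((isUnit_iff_isUnit_det D).mp hDu), one_mulVec]

end Matrix

lemma trace_symDyad_mul {n : ℕ} {M : Matrix (Fin n) (Fin n) ℝ} (hM : M.IsSymm)
    (x y : Fin n → ℝ) : (symDyad n x y * M).trace = 2 * (x ⬝ᵥ M *ᵥ y) := by
  rw [symDyad, add_mul, trace_add, trace_vecMulVec_mul, trace_vecMulVec_mul,
    hM.mulVec_dotProduct, dotProduct_comm (M *ᵥ y)]
  ring

section UnifiedTraceForm

variable {ι K : Type*} [Fintype ι] [DecidableEq ι] [Field K]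

/-- The matrix part `M ↦ g_D((M, ·), (Z, ·))` of the unified metric with parameter `α`. -/
noncomputable def unifiedTraceForm (α : K) (D Z : Matrix ι ι K) : Matrix ι ι K →ₗ[K] K where
  toFun M := 1 / 2 * (D⁻¹ * M * D⁻¹ * Z).trace + α * (D⁻¹ * M).trace * (D⁻¹ * Z).trace
  map_add' M N := by
    simp only [mul_add, add_mul, trace_add]
    ring
  map_smul' c M := by
    simp only [Matrix.mul_smul, Matrix.smul_mul, trace_smul, smul_eq_mul, RingHom.id_apply]
    ring

variable (α : K) {D : Matrix ι ι K} (Z : Matrix ι ι K)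

lemma unifiedTraceForm_apply (M : Matrix ι ι K) :
    unifiedTraceForm α D Z M =
      1 / 2 * (D⁻¹ * M * D⁻¹ * Z).trace + α * (D⁻¹ * M).trace * (D⁻¹ * Z).trace :=
  rfl

lemma unifiedTraceForm_conj (hD : IsUnit D) (S : Matrix ι ι K) :
    unifiedTraceForm α D Z (D * S * D) =
      1 / 2 * (S * Z).trace + α * (S * D).trace * (D⁻¹ * Z).trace := by
  have hdet := (isUnit_iff_isUnit_det D).mp hD
  have hcancel : D⁻¹ * (D * S * D) = S * D := by
    rw [mul_assoc, nonsing_inv_mul_cancel_left _ _ hdet]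
  rw [unifiedTraceForm_apply, hcancel, mul_nonsing_inv_cancel_right _ _ hdet]

lemma unifiedTraceForm_self (hD : IsUnit D) :
    unifiedTraceForm α D Z D = (1 / 2 + α * Fintype.card ι) * (D⁻¹ * Z).trace := by
  have hdet := (isUnit_iff_isUnit_det D).mp hD
  rw [unifiedTraceForm_apply, nonsing_inv_mul _ hdet, one_mul, trace_one]
  ring

end UnifiedTraceForm

theorem covariantDeriv_koszul_general (n : ℕ) (α β : ℝ)
    (hα : α ≠ -1 / (2 * (n : ℝ)))
    (D : Matrix (Fin n) (Fin n) ℝ) (hD : D.PosDef)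
    (X Y Z : Matrix (Fin n) (Fin n) ℝ)
    (hX : X.IsSymm) (hY : Y.IsSymm) (hZ : Z.IsSymm)
    (x y z : Fin n → ℝ) :
    (1 / 2) * (D⁻¹ *
        (-((1 : ℝ) / 2) • (X * D⁻¹ * Y + Y * D⁻¹ * X) -
          (β / 2) • (D * symDyad n x y * D) +
          ((2 * α * β / (1 + 2 * n * α)) * (x ⬝ᵥ D.mulVec y)) • D) * D⁻¹ * Z).trace +
      α * (D⁻¹ *
        (-((1 : ℝ) / 2) • (X * D⁻¹ * Y + Y * D⁻¹ * X) -
          (β / 2) • (D * symDyad n x y * D) +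
          ((2 * α * β / (1 + 2 * n * α)) * (x ⬝ᵥ D.mulVec y)) • D)).trace *
        (D⁻¹ * Z).trace +
      β * ((((1 : ℝ) / 2) • (D⁻¹.mulVec (X.mulVec y + Y.mulVec x))) ⬝ᵥ D.mulVec z) =
    -(1 / 4) * (D⁻¹ * (X * D⁻¹ * Y + Y * D⁻¹ * X) * D⁻¹ * Z).trace -
      (α / 2) * (D⁻¹ * (X * D⁻¹ * Y + Y * D⁻¹ * X)).trace * (D⁻¹ * Z).trace +
      (β / 2) * ((y ⬝ᵥ X.mulVec z) + (x ⬝ᵥ Y.mulVec z) - (x ⬝ᵥ Z.mulVec y)) := by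
  have hDu : IsUnit D := hD.isUnit
  have hDs : D.IsSymm := isHermitian_iff_isSymm.mp hD.isHermitian
  have hcoef : (1 + 2 * n * α) * (2 * α * β / (1 + 2 * n * α)) = 2 * α * β := by
    refine mul_div_cancel₀ _ fun h ↦ hα ?_
    have hn : (2 * n : ℝ) ≠ 0 := fun h0 ↦ by simp [h0] at h
    rw [eq_div_iff hn]
    linarith
  rw [← unifiedTraceForm_apply, map_add, map_sub, map_smul, map_smul, map_smul,
    unifiedTraceForm_conj _ _ hDu, unifiedTraceForm_self _ _ hDu, unifiedTraceForm_apply,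
    trace_symDyad_mul hZ, trace_symDyad_mul hDs, Fintype.card_fin, smul_dotProduct,
    hDs.inv_mulVec_dotProduct_mulVec hDu, add_dotProduct, hX.mulVec_dotProduct,
    hY.mulVec_dotProduct]
  simp only [smul_eq_mul]
  linear_combination (x ⬝ᵥ D *ᵥ y) * (D⁻¹ * Z).trace / 2 * hcoef

/-- the explicit covariant derivative of the unified metric satisfies the
Koszul identity. -/
theorem covariantDeriv_koszul (n : ℕ) (hn : 1 ≤ n) (α β : ℝ)
    (hα : α ≠ -1 / (2 * (n : ℝ)))
    (D : Matrix (Fin n) (Fin n) ℝ) (hD : D.PosDef) (u : Fin n → ℝ)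
    (X Y Z : Matrix (Fin n) (Fin n) ℝ)
    (hX : X.IsSymm) (hY : Y.IsSymm) (hZ : Z.IsSymm)
    (x y z : Fin n → ℝ) :
    (1 / 2) * (D⁻¹ *
        (-((1 : ℝ) / 2) • (X * D⁻¹ * Y + Y * D⁻¹ * X) -
          (β / 2) • (D * symDyad n x y * D) +
          ((2 * α * β / (1 + 2 * n * α)) * (x ⬝ᵥ D.mulVec y)) • D) * D⁻¹ * Z).trace +
      α * (D⁻¹ *
        (-((1 : ℝ) / 2) • (X * D⁻¹ * Y + Y * D⁻¹ * X) -
          (β / 2) • (D * symDyad n x y * D) +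
          ((2 * α * β / (1 + 2 * n * α)) * (x ⬝ᵥ D.mulVec y)) • D)).trace *
        (D⁻¹ * Z).trace +
      β * ((((1 : ℝ) / 2) • (D⁻¹.mulVec (X.mulVec y + Y.mulVec x))) ⬝ᵥ D.mulVec z) =
    -(1 / 4) * (D⁻¹ * (X * D⁻¹ * Y + Y * D⁻¹ * X) * D⁻¹ * Z).trace -
      (α / 2) * (D⁻¹ * (X * D⁻¹ * Y + Y * D⁻¹ * X)).trace * (D⁻¹ * Z).trace +
      (β / 2) * ((y ⬝ᵥ X.mulVec z) + (x ⬝ᵥ Y.mulVec z) - (x ⬝ᵥ Z.mulVec y)) :=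
  covariantDeriv_koszul_general n α β hα D hD X Y Z hX hY hZ x y z
end

section
/- Let α > −1/2, β > 0 and a, b, c, d ∈ ℝ with a ≠ 0. The curve γ: ℝ → ℝ₊ × ℝ with D(t) = (2/a²)·cosh²(bt + c) and u(t) = a·√((1+2α)/β)·tanh(bt + c) + d satisfies, for all t ∈ ℝ, the geodesic equations D̈(t) = Ḋ(t)²/D(t) + (β/(1+2α))·D(t)²·u̇(t)² and ü(t) = −(Ḋ(t)/D(t))·u̇(t). -/
/-!
The curve is `D = A cosh² s`, `u = k tanh s + d` with `s = bt + c`. Both geodesic equations reduce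
to `cosh² s - sinh² s = 1`, the first one once the amplitude `A = 2/a²` and the speed
`k = a √((1+2α)/β)` are tied by `(β/(1+2α)) A k² = 2`.
-/

open Real

theorem Real.hasDerivAt_tanh (x : ℝ) : HasDerivAt tanh (cosh x ^ 2)⁻¹ x := by
  have h := (hasDerivAt_sinh x).div (hasDerivAt_cosh x) (cosh_pos x).ne'
  rw [show sinh / cosh = tanh from funext fun y => (tanh_eq_sinh_div_cosh y).symm] at h
  refine h.congr_deriv ?_
  rw [← sq, ← sq, cosh_sq_sub_sinh_sq, one_div]

theorem HasDerivAt.tanh {f : ℝ → ℝ} {f' x : ℝ} (hf : HasDerivAt f f' x) :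
    HasDerivAt (fun t => Real.tanh (f t)) ((Real.cosh (f x) ^ 2)⁻¹ * f') x :=
  (hasDerivAt_tanh (f x)).comp x hf

/-- The geodesic equations of the one-dimensional unified metric, with `m = β / (1 + 2α)`. -/
def SatisfiesGeodesicEqns (m : ℝ) (D u : ℝ → ℝ) : Prop :=
  ∀ t, deriv (deriv D) t = deriv D t ^ 2 / D t + m * D t ^ 2 * deriv u t ^ 2 ∧
    deriv (deriv u) t = -(deriv D t / D t) * deriv u t

section AffineArgument

variable (b c : ℝ)

theorem hasDerivAt_affine (t : ℝ) : HasDerivAt (fun t => b * t + c) b t := by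
  simpa using ((hasDerivAt_id t).const_mul b).add_const c

theorem deriv_mul_cosh_sq_affine (A : ℝ) :
    deriv (fun t => A * cosh (b * t + c) ^ 2) =
      fun t => 2 * A * b * (cosh (b * t + c) * sinh (b * t + c)) := by
  funext t
  have h := (((hasDerivAt_affine b c t).cosh).fun_pow 2).const_mul A
  rw [h.deriv]
  ring

theorem deriv_deriv_mul_cosh_sq_affine (A t : ℝ) :
    deriv (deriv fun t => A * cosh (b * t + c) ^ 2) t =
      2 * A * b ^ 2 * (cosh (b * t + c) ^ 2 + sinh (b * t + c) ^ 2) := by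
  have h := (((hasDerivAt_affine b c t).cosh).fun_mul (hasDerivAt_affine b c t).sinh).const_mul
    (2 * A * b)
  rw [deriv_mul_cosh_sq_affine, h.deriv]
  ring

theorem deriv_mul_tanh_affine_add (k d : ℝ) :
    deriv (fun t => k * Real.tanh (b * t + c) + d) = fun t => k * b / cosh (b * t + c) ^ 2 := by
  funext t
  rw [((((hasDerivAt_affine b c t).tanh).const_mul k).add_const d).deriv]
  ring

theorem deriv_deriv_mul_tanh_affine_add (k d t : ℝ) :
    deriv (deriv fun t => k * Real.tanh (b * t + c) + d) t =
      -(2 * k * b ^ 2 * sinh (b * t + c) / cosh (b * t + c) ^ 3) := by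
  have hcosh : cosh (b * t + c) ≠ 0 := (cosh_pos _).ne'
  have h := (hasDerivAt_const t (k * b)).fun_div ((hasDerivAt_affine b c t).cosh.fun_pow 2)
    (pow_ne_zero 2 hcosh)
  rw [deriv_mul_tanh_affine_add, h.deriv]
  field_simp
  ring

theorem satisfiesGeodesicEqns_cosh_sq_tanh {m A k : ℝ} (hA : A ≠ 0) (hmAk : m * A * k ^ 2 = 2)
    (d : ℝ) :
    SatisfiesGeodesicEqns m (fun t => A * cosh (b * t + c) ^ 2)
      (fun t => k * Real.tanh (b * t + c) + d) := by
  intro t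
  have hcosh : cosh (b * t + c) ≠ 0 := (cosh_pos _).ne'
  have hpyth := cosh_sq_sub_sinh_sq (b * t + c)
  rw [deriv_deriv_mul_cosh_sq_affine, deriv_deriv_mul_tanh_affine_add,
    deriv_mul_cosh_sq_affine, deriv_mul_tanh_affine_add]
  constructor
  · field_simp
    linear_combination 2 * b ^ 2 * hpyth - b ^ 2 * hmAk
  · field_simp

end AffineArgument

/-- the explicit curve `t ↦ ((2/a²)·cosh²(bt+c), a·√((1+2α)/β)·tanh(bt+c)+d)`
in the half-plane satisfies the one-dimensional geodesic equations of the unified metric. -/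
theorem geodesic_curve_dim_one (α β : ℝ) (hα : -1 / 2 < α) (hβ : 0 < β)
    (a b c d : ℝ) (ha : a ≠ 0) (t : ℝ) :
    deriv (deriv fun t : ℝ => 2 / a ^ 2 * Real.cosh (b * t + c) ^ 2) t =
        (deriv (fun t : ℝ => 2 / a ^ 2 * Real.cosh (b * t + c) ^ 2) t) ^ 2 /
          (2 / a ^ 2 * Real.cosh (b * t + c) ^ 2) +
        β / (1 + 2 * α) * (2 / a ^ 2 * Real.cosh (b * t + c) ^ 2) ^ 2 *
          (deriv (fun t : ℝ =>
            a * Real.sqrt ((1 + 2 * α) / β) * Real.tanh (b * t + c) + d) t) ^ 2 ∧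
      deriv (deriv fun t : ℝ =>
          a * Real.sqrt ((1 + 2 * α) / β) * Real.tanh (b * t + c) + d) t =
        -(deriv (fun t : ℝ => 2 / a ^ 2 * Real.cosh (b * t + c) ^ 2) t /
            (2 / a ^ 2 * Real.cosh (b * t + c) ^ 2)) *
          deriv (fun t : ℝ =>
            a * Real.sqrt ((1 + 2 * α) / β) * Real.tanh (b * t + c) + d) t := by
  have hα' : 0 < 1 + 2 * α := by linarith
  have hnormalised : β / (1 + 2 * α) * (2 / a ^ 2) * (a * √((1 + 2 * α) / β)) ^ 2 = 2 := by
    rw [mul_pow, sq_sqrt (by positivity)]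
    field_simp
  exact satisfiesGeodesicEqns_cosh_sq_tanh b c (by positivity) hnormalised d t
end

section
/- Let α ∈ ℝ, let D₀ be an n×n real symmetric positive definite matrix, L an n×n real symmetric matrix, and γ(t) = D₀^{1/2}·exp(tL)·D₀^{1/2}. Then for all t ∈ ℝ, g_{γ(t)}(γ̇(t), γ̇(t)) = (1/2)·Tr(L²) + α·(Tr L)². In particular, if D₁ = D₀^{1/2}·exp(L)·D₀^{1/2} with L = log(D₀^{−1/2} D₁ D₀^{−1/2}), the geodesic distance between D₀ and D₁ is √( (1/2)·Tr log²(D₀^{−1/2} D₁ D₀^{−1/2}) + α·Tr² log(D₀^{−1/2} D₁ D₀^{−1/2}) ). -/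
open Matrix intervalIntegral
open scoped MatrixOrder

/-! With `S = D₀^{1/2}`, the logarithmic derivative `γ⁻¹ γ̇ = S⁻¹ L S` does not depend on `t`
and is similar to `L`, so both traces in the speed are those of `L` and `L²`. The speed is
therefore constant and the length of `γ` on `[0, 1]` is its square root. -/

section
variable {m R : Type*} [Fintype m] [DecidableEq m] [CommRing R]

theorem Matrix.inv_sandwich_mul_sandwich {S E : Matrix m m R} (hS : IsUnit S) (hE : IsUnit E)
    (L : Matrix m m R) : (S * E * S)⁻¹ * (S * (E * L) * S) = S⁻¹ * L * S := by
  have hSdet := (isUnit_iff_isUnit_det S).mp hS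
  rw [mul_inv_rev, mul_inv_rev]
  simp only [Matrix.mul_assoc]
  rw [nonsing_inv_mul_cancel_left _ _ hSdet,
    nonsing_inv_mul_cancel_left _ _ ((isUnit_iff_isUnit_det E).mp hE)]

theorem Matrix.conj_mul_conj {S : Matrix m m R} (hS : IsUnit S) (A B : Matrix m m R) :
    S⁻¹ * A * S * (S⁻¹ * B * S) = S⁻¹ * (A * B) * S := by
  simp only [Matrix.mul_assoc]
  rw [mul_nonsing_inv_cancel_left _ _ ((isUnit_iff_isUnit_det S).mp hS)]

end

open scoped Matrix.Norms.Operator in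
theorem Matrix.hasDerivAt_sandwich_exp_smul_apply {m : Type*} [Fintype m] [DecidableEq m]
    (S L : Matrix m m ℝ) (t : ℝ) (i j : m) :
    HasDerivAt (fun s : ℝ => (S * NormedSpace.exp (s • L) * S) i j)
      ((S * (NormedSpace.exp (t • L) * L) * S) i j) t := by
  have h := ((hasDerivAt_exp_smul_const L t).const_mul S).mul_const S
  exact hasDerivAt_pi.mp (hasDerivAt_pi.mp h i) j

theorem geodesic_speed_and_distance_general (n : ℕ) (α : ℝ)
    (D₀ L : Matrix (Fin n) (Fin n) ℝ) (hD₀ : D₀.PosDef)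
    (γ γ' : ℝ → Matrix (Fin n) (Fin n) ℝ)
    (hγ : ∀ t, γ t =
      CFC.sqrt D₀ * NormedSpace.exp (t • L) * CFC.sqrt D₀)
    (hγ' : ∀ t i j, HasDerivAt (fun s => γ s i j) (γ' t i j) t) :
    (∀ t : ℝ,
        (1 / 2) * ((γ t)⁻¹ * γ' t * (γ t)⁻¹ * γ' t).trace +
            α * ((γ t)⁻¹ * γ' t).trace ^ 2 =
          (1 / 2) * (L * L).trace + α * L.trace ^ 2) ∧
      (∫ t in (0 : ℝ)..1,
          Real.sqrt ((1 / 2) * ((γ t)⁻¹ * γ' t * (γ t)⁻¹ * γ' t).trace +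
            α * ((γ t)⁻¹ * γ' t).trace ^ 2)) =
        Real.sqrt ((1 / 2) * (L * L).trace + α * L.trace ^ 2) := by
  set S := CFC.sqrt D₀
  have hS : IsUnit S := CFC.isUnit_sqrt_iff_isStrictlyPositive.mpr hD₀.isStrictlyPositive
  have hγ'_eq (t : ℝ) : γ' t = S * (NormedSpace.exp (t • L) * L) * S := by
    ext i j
    refine (hγ' t i j).unique ?_
    simpa only [hγ] using hasDerivAt_sandwich_exp_smul_apply S L t i j
  have hlogDeriv (t : ℝ) : (γ t)⁻¹ * γ' t = S⁻¹ * L * S := by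
    rw [hγ, hγ'_eq]
    exact inv_sandwich_mul_sandwich hS (isUnit_exp (t • L)) L
  have hspeed (t : ℝ) : (1 / 2) * ((γ t)⁻¹ * γ' t * (γ t)⁻¹ * γ' t).trace +
      α * ((γ t)⁻¹ * γ' t).trace ^ 2 = (1 / 2) * (L * L).trace + α * L.trace ^ 2 := by
    rw [Matrix.mul_assoc _ (γ t)⁻¹, hlogDeriv, conj_mul_conj hS,
      trace_conj' hS, trace_conj' hS]
  refine ⟨hspeed, ?_⟩
  simp_rw [hspeed, integral_const, sub_zero, one_smul]

/-- along the geodesic `γ(t) = D₀^{1/2}·exp(tL)·D₀^{1/2}` the squared speed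
with respect to the metric `g_D(X,Y) = (1/2)·Tr(D⁻¹XD⁻¹Y) + α·Tr(D⁻¹X)·Tr(D⁻¹Y)` is the
constant `(1/2)·Tr(L²) + α·(Tr L)²`; in particular, with
`L = log(D₀^{−1/2}·D₁·D₀^{−1/2})` (i.e. `exp L = D₀^{−1/2}·D₁·D₀^{−1/2}`, `D₁ = γ(1)`),
the geodesic distance between `D₀` and `D₁` is `√((1/2)·Tr(L²) + α·(Tr L)²)`. -/
theorem geodesic_speed_and_distance (n : ℕ) (α : ℝ)
    (D₀ L : Matrix (Fin n) (Fin n) ℝ) (hD₀ : D₀.PosDef) (hL : L.IsSymm)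
    (γ γ' : ℝ → Matrix (Fin n) (Fin n) ℝ)
    (hγ : ∀ t, γ t =
      CFC.sqrt D₀ * NormedSpace.exp (t • L) * CFC.sqrt D₀)
    (hγ' : ∀ t i j, HasDerivAt (fun s => γ s i j) (γ' t i j) t) :
    (∀ t : ℝ,
        (1 / 2) * ((γ t)⁻¹ * γ' t * (γ t)⁻¹ * γ' t).trace +
            α * ((γ t)⁻¹ * γ' t).trace ^ 2 =
          (1 / 2) * (L * L).trace + α * L.trace ^ 2) ∧
      (∫ t in (0 : ℝ)..1,
          Real.sqrt ((1 / 2) * ((γ t)⁻¹ * γ' t * (γ t)⁻¹ * γ' t).trace +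
            α * ((γ t)⁻¹ * γ' t).trace ^ 2)) =
        Real.sqrt ((1 / 2) * (L * L).trace + α * L.trace ^ 2) :=
  geodesic_speed_and_distance_general n α D₀ L hD₀ γ γ' hγ hγ'
end

section
/- Fix n ≥ 1 and α, β ∈ ℝ with α ≠ −1/(2n) and β ≠ 0, and let D ∈ 𝓜ₙ, u ∈ ℝⁿ. Define the linear map R̃ on pairs (X,x) (X symmetric n×n, x ∈ ℝⁿ) by R̃(X,x) = ( −((n+1)/2)·X + ((1+2(n+1)α)/(2(1+2nα)))·Tr(D⁻¹X)·D , −x/(2(1+2nα)) ). Then (i) g_{D,u}(R̃(X,x),(Y,y)) = −((n+1)/4)·Tr(D⁻¹XD⁻¹Y) + (1/4)·Tr(D⁻¹X)·Tr(D⁻¹Y) − (β/(2(1+2nα)))·⟨x,Dy⟩ for all (X,x),(Y,y), i.e. R̃ represents the Ricci tensor with respect to g; (ii) the trace of R̃ on Sym(n) × ℝⁿ equals −n(n+1)(2(n+2)(n−1)α + n+1)/(4(1+2nα)), the scalar curvature of the space of normal distributions; and (iii) the trace of the matrix component X ↦ −((n+1)/2)·X + ((1+2(n+1)α)/(2(1+2nα)))·Tr(D⁻¹X)·D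 on Sym(n) equals −n(2(n−1)(n+1)(n+2)α + n² + 2n − 1)/(4(1+2nα)), the scalar curvature of the space of special normal distributions. -/
/-!
On `Sym(n)` the endomorphism is `a • id + c • (Tr (D⁻¹ ·) ⊗ D)`, and on `ℝⁿ` it is a scalar `b`.
The rank-one part has trace `Tr (D⁻¹ D) = n`, and `Sym(n)` has dimension `n (n + 1) / 2`, being the
space of functions on unordered pairs of indices; so both traces are explicit rational functions
of `n` and `α`. The representation of the Ricci tensor is a direct computation using `D⁻¹ D = 1`.
-/

open Matrix

/-- The submodule of symmetric `n×n` real matrices. -/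
def symSub (n : ℕ) : Submodule ℝ (Matrix (Fin n) (Fin n) ℝ) where
  carrier := {A | A.IsSymm}
  add_mem' := fun hA hB => hA.add hB
  zero_mem' := Matrix.isSymm_zero
  smul_mem' := fun c _ hA => hA.smul c

noncomputable def symSubEquivSym2 (n : ℕ) : symSub n ≃ₗ[ℝ] (Sym2 (Fin n) → ℝ) where
  toFun A := Sym2.lift ⟨fun i j => (A : Matrix (Fin n) (Fin n) ℝ) i j, fun i j => A.2.apply j i⟩
  map_add' A B := by ext s; induction s using Sym2.ind; rfl
  map_smul' c A := by ext s; induction s using Sym2.ind; rfl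
  invFun f := ⟨Matrix.of fun i j => f s(i, j), IsSymm.ext fun i j => by simp [Sym2.eq_swap]⟩
  left_inv A := by ext i j; rfl
  right_inv f := by ext s; induction s using Sym2.ind; rfl

lemma finrank_symSub (n : ℕ) : Module.finrank ℝ (symSub n) = (n + 1).choose 2 := by
  rw [(symSubEquivSym2 n).finrank_eq, Module.finrank_fintype_fun_eq_card, Sym2.card,
    Fintype.card_fin]

lemma LinearMap.trace_eq_of_apply_eq_smul_add_smul {R M : Type*} [CommRing R] [AddCommGroup M]
    [Module R M] [Module.Free R M] [Module.Finite R M] (f : M →ₗ[R] M) (a : R) (φ : M →ₗ[R] R)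
    (w : M) (hf : ∀ v, f v = a • v + φ v • w) :
    trace R M f = a * Module.finrank R M + φ w := by
  have : f = a • LinearMap.id + φ.smulRight w := LinearMap.ext hf
  rw [this, map_add, map_smul, trace_id, trace_smulRight, smul_eq_mul]

lemma trace_symSub_of_apply_eq {n : ℕ} {D : Matrix (Fin n) (Fin n) ℝ} (hD : D.IsSymm)
    (hDinv : D⁻¹ * D = 1) (a c : ℝ) (S : symSub n →ₗ[ℝ] symSub n)
    (hS : ∀ (X : Matrix (Fin n) (Fin n) ℝ) (hX : X.IsSymm),
      ((S ⟨X, hX⟩ : symSub n) : Matrix (Fin n) (Fin n) ℝ) = a • X + (c * (D⁻¹ * X).trace) • D) :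
    LinearMap.trace ℝ _ S = a * ((n : ℝ) * (n + 1) / 2) + c * n := by
  let φ : symSub n →ₗ[ℝ] ℝ :=
    (traceLinearMap (Fin n) ℝ ℝ).comp ((LinearMap.mulLeft ℝ D⁻¹).comp (symSub n).subtype)
  have hφ : φ ⟨D, hD⟩ = n := by simp [φ, hDinv]
  rw [S.trace_eq_of_apply_eq_smul_add_smul a (c • φ) ⟨D, hD⟩ fun X => Subtype.ext (hS X.1 X.2),
    finrank_symSub, Nat.cast_choose_two, LinearMap.smul_apply, hφ, smul_eq_mul]
  push_cast
  ring

lemma one_add_two_mul_mul_ne_zero {n α : ℝ} (hα : α ≠ -1 / (2 * n)) : 1 + 2 * n * α ≠ 0 := by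
  intro h
  rcases eq_or_ne n 0 with rfl | hn
  · simp at h
  · exact hα (by field_simp; linarith)

lemma unifiedMetric_ricciEndomorphism_eq_ricci {n : ℕ} (α β : ℝ) (hk : 1 + 2 * (n : ℝ) * α ≠ 0)
    {D : Matrix (Fin n) (Fin n) ℝ} (hDinv : D⁻¹ * D = 1)
    (X : Matrix (Fin n) (Fin n) ℝ) (x : Fin n → ℝ) (Y : Matrix (Fin n) (Fin n) ℝ)
    (y : Fin n → ℝ) :
    (1 / 2) * (D⁻¹ *
        (-(((n : ℝ) + 1) / 2) • X +
          ((1 + 2 * ((n : ℝ) + 1) * α) / (2 * (1 + 2 * n * α)) *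
            (D⁻¹ * X).trace) • D) * D⁻¹ * Y).trace +
      α * (D⁻¹ *
        (-(((n : ℝ) + 1) / 2) • X +
          ((1 + 2 * ((n : ℝ) + 1) * α) / (2 * (1 + 2 * n * α)) *
            (D⁻¹ * X).trace) • D)).trace * (D⁻¹ * Y).trace +
      β * ((-(1 / (2 * (1 + 2 * (n : ℝ) * α))) • x) ⬝ᵥ D.mulVec y) =
    -(((n : ℝ) + 1) / 4) * (D⁻¹ * X * D⁻¹ * Y).trace +
      (1 / 4) * (D⁻¹ * X).trace * (D⁻¹ * Y).trace -
      β / (2 * (1 + 2 * n * α)) * (x ⬝ᵥ D.mulVec y) := by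
  have hsplit : ∀ a c : ℝ, D⁻¹ * (a • X + c • D) = a • (D⁻¹ * X) + c • 1 := fun a c => by
    rw [Matrix.mul_add, Matrix.mul_smul, Matrix.mul_smul, hDinv]
  simp only [hsplit, Matrix.add_mul, Matrix.smul_mul, Matrix.one_mul, trace_add, trace_smul,
    trace_one, smul_dotProduct, smul_eq_mul, Fintype.card_fin]
  field_simp
  ring

theorem ricci_endomorphism_and_scalar_curvature_general (n : ℕ) (α β : ℝ)
    (hα : α ≠ -1 / (2 * (n : ℝ)))
    (D : Matrix (Fin n) (Fin n) ℝ) (hD : D.PosDef)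
    (T : (symSub n × (Fin n → ℝ)) →ₗ[ℝ] (symSub n × (Fin n → ℝ)))
    (hT : ∀ (X : Matrix (Fin n) (Fin n) ℝ) (hX : X.IsSymm) (x : Fin n → ℝ),
      ((T (⟨X, hX⟩, x)).1 : Matrix (Fin n) (Fin n) ℝ) =
          -(((n : ℝ) + 1) / 2) • X +
            ((1 + 2 * ((n : ℝ) + 1) * α) / (2 * (1 + 2 * n * α)) *
              (D⁻¹ * X).trace) • D ∧
        (T (⟨X, hX⟩, x)).2 = -(1 / (2 * (1 + 2 * (n : ℝ) * α))) • x)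
    (S : symSub n →ₗ[ℝ] symSub n)
    (hS : ∀ (X : Matrix (Fin n) (Fin n) ℝ) (hX : X.IsSymm),
      ((S ⟨X, hX⟩ : symSub n) : Matrix (Fin n) (Fin n) ℝ) =
        -(((n : ℝ) + 1) / 2) • X +
          ((1 + 2 * ((n : ℝ) + 1) * α) / (2 * (1 + 2 * n * α)) *
            (D⁻¹ * X).trace) • D) :
    (∀ (X : Matrix (Fin n) (Fin n) ℝ) (_ : X.IsSymm) (x : Fin n → ℝ)
        (Y : Matrix (Fin n) (Fin n) ℝ) (_ : Y.IsSymm) (y : Fin n → ℝ),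
        (1 / 2) * (D⁻¹ *
            (-(((n : ℝ) + 1) / 2) • X +
              ((1 + 2 * ((n : ℝ) + 1) * α) / (2 * (1 + 2 * n * α)) *
                (D⁻¹ * X).trace) • D) * D⁻¹ * Y).trace +
          α * (D⁻¹ *
            (-(((n : ℝ) + 1) / 2) • X +
              ((1 + 2 * ((n : ℝ) + 1) * α) / (2 * (1 + 2 * n * α)) *
                (D⁻¹ * X).trace) • D)).trace * (D⁻¹ * Y).trace +
          β * ((-(1 / (2 * (1 + 2 * (n : ℝ) * α))) • x) ⬝ᵥ D.mulVec y) =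
        -(((n : ℝ) + 1) / 4) * (D⁻¹ * X * D⁻¹ * Y).trace +
          (1 / 4) * (D⁻¹ * X).trace * (D⁻¹ * Y).trace -
          β / (2 * (1 + 2 * n * α)) * (x ⬝ᵥ D.mulVec y)) ∧
      LinearMap.trace ℝ _ T =
        -((n : ℝ) * (n + 1) * (2 * (n + 2) * (n - 1) * α + n + 1)) /
          (4 * (1 + 2 * n * α)) ∧
      LinearMap.trace ℝ _ S =
        -((n : ℝ) * (2 * (n - 1) * (n + 1) * (n + 2) * α + n ^ 2 + 2 * n - 1)) /
          (4 * (1 + 2 * n * α)) := by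
  have hk := one_add_two_mul_mul_ne_zero hα
  -- the form in which `field_simp` looks for the denominator
  have hk' : 1 + (n : ℝ) * 2 * α ≠ 0 := by convert hk using 2; ring
  have hDinv : D⁻¹ * D = 1 := nonsing_inv_mul D hD.det_pos.ne'.isUnit
  have hS_trace :=
    trace_symSub_of_apply_eq (isHermitian_iff_isSymm.1 hD.isHermitian) hDinv _ _ S hS
  have hT_eq : T = S.prodMap ((-(1 / (2 * (1 + 2 * (n : ℝ) * α)))) • LinearMap.id) :=
    LinearMap.ext fun ⟨X, x⟩ => Prod.ext (Subtype.ext ((hT X.1 X.2 x).1.trans (hS X.1 X.2).symm))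
      (hT X.1 X.2 x).2
  refine ⟨fun X _ x Y _ y => unifiedMetric_ricciEndomorphism_eq_ricci α β hk hDinv X x Y y, ?_, ?_⟩
  · rw [hT_eq, LinearMap.trace_prodMap', hS_trace, map_smul, LinearMap.trace_id,
      Module.finrank_fin_fun, smul_eq_mul]
    field_simp
    ring
  · rw [hS_trace]
    field_simp
    ring

/-- the endomorphism `R̃` represents the Ricci tensor of the unified metric,
its trace is the scalar curvature of the space of normal distributions, and the trace of
its matrix component is the scalar curvature of the space of special normal
distributions. -/
theorem ricci_endomorphism_and_scalar_curvature (n : ℕ) (hn : 1 ≤ n) (α β : ℝ)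
    (hα : α ≠ -1 / (2 * (n : ℝ))) (hβ : β ≠ 0)
    (D : Matrix (Fin n) (Fin n) ℝ) (hD : D.PosDef) (u : Fin n → ℝ)
    (T : (symSub n × (Fin n → ℝ)) →ₗ[ℝ] (symSub n × (Fin n → ℝ)))
    (hT : ∀ (X : Matrix (Fin n) (Fin n) ℝ) (hX : X.IsSymm) (x : Fin n → ℝ),
      ((T (⟨X, hX⟩, x)).1 : Matrix (Fin n) (Fin n) ℝ) =
          -(((n : ℝ) + 1) / 2) • X +
            ((1 + 2 * ((n : ℝ) + 1) * α) / (2 * (1 + 2 * n * α)) *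
              (D⁻¹ * X).trace) • D ∧
        (T (⟨X, hX⟩, x)).2 = -(1 / (2 * (1 + 2 * (n : ℝ) * α))) • x)
    (S : symSub n →ₗ[ℝ] symSub n)
    (hS : ∀ (X : Matrix (Fin n) (Fin n) ℝ) (hX : X.IsSymm),
      ((S ⟨X, hX⟩ : symSub n) : Matrix (Fin n) (Fin n) ℝ) =
        -(((n : ℝ) + 1) / 2) • X +
          ((1 + 2 * ((n : ℝ) + 1) * α) / (2 * (1 + 2 * n * α)) *
            (D⁻¹ * X).trace) • D) :
    (∀ (X : Matrix (Fin n) (Fin n) ℝ) (_ : X.IsSymm) (x : Fin n → ℝ)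
        (Y : Matrix (Fin n) (Fin n) ℝ) (_ : Y.IsSymm) (y : Fin n → ℝ),
        (1 / 2) * (D⁻¹ *
            (-(((n : ℝ) + 1) / 2) • X +
              ((1 + 2 * ((n : ℝ) + 1) * α) / (2 * (1 + 2 * n * α)) *
                (D⁻¹ * X).trace) • D) * D⁻¹ * Y).trace +
          α * (D⁻¹ *
            (-(((n : ℝ) + 1) / 2) • X +
              ((1 + 2 * ((n : ℝ) + 1) * α) / (2 * (1 + 2 * n * α)) *
                (D⁻¹ * X).trace) • D)).trace * (D⁻¹ * Y).trace +
          β * ((-(1 / (2 * (1 + 2 * (n : ℝ) * α))) • x) ⬝ᵥ D.mulVec y) =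
        -(((n : ℝ) + 1) / 4) * (D⁻¹ * X * D⁻¹ * Y).trace +
          (1 / 4) * (D⁻¹ * X).trace * (D⁻¹ * Y).trace -
          β / (2 * (1 + 2 * n * α)) * (x ⬝ᵥ D.mulVec y)) ∧
      LinearMap.trace ℝ _ T =
        -((n : ℝ) * (n + 1) * (2 * (n + 2) * (n - 1) * α + n + 1)) /
          (4 * (1 + 2 * n * α)) ∧
      LinearMap.trace ℝ _ S =
        -((n : ℝ) * (2 * (n - 1) * (n + 1) * (n + 2) * α + n ^ 2 + 2 * n - 1)) /
          (4 * (1 + 2 * n * α)) :=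
  ricci_endomorphism_and_scalar_curvature_general n α β hα D hD T hT S hS
end
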